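/- Let p be a prime, let (X,(x_n)_{n∈ℤ}) be a ℤ-system of order p with shift automorphism t, and let Y ≤ X be a shift-invariant subgroup. Then there exist elements a, b ∈ Y such that Y = ⟨t^k(a), t^k(b) : k ∈ ℤ⟩. -/

import Mathlib

/-- The subgroup `X_{n,m}` generated by the `x_k` with `n ≤ k ≤ m`. -/
def XIcc {X : Type*} [Group X] (x : ℤ → X) (n m : ℤ) : Subgroup X :=
  Subgroup.closure (x '' Set.Icc n m)

/-- The subgroup `X_{n,∞}` generated by the `x_k` with `n ≤ k`. -/
def XIci {X : Type*} [Group X] (x : ℤ → X) (n : ℤ) : Subgroup X :=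
  Subgroup.closure (x '' Set.Ici n)

/-- The subgroup `X_{-∞,m}` generated by the `x_k` with `k ≤ m`. -/
def XIic {X : Type*} [Group X] (x : ℤ → X) (m : ℤ) : Subgroup X :=
  Subgroup.closure (x '' Set.Iic m)

/-- A ℤ-system of order `p`: a group `X` together with a family `(x_n)_{n ∈ ℤ}` such that
(ZS1) the `x_n` generate `X`, (ZS2) `⟨x_k : n ≤ k ≤ m⟩` has order `p^(m-n+1)`, and
(ZS3) there is a (shift) automorphism `t` of `X` with `t (x n) = x (n+2)` for all `n`. -/
structure IsZSystem (p : ℕ) {X : Type*} [Group X] (x : ℤ → X) : Prop where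
  closure_range : Subgroup.closure (Set.range x) = ⊤
  card_Icc : ∀ n m : ℤ, n ≤ m → Nat.card (XIcc x n m) = p ^ (m - n + 1).toNat
  exists_shift : ∃ t : MulAut X, ∀ n : ℤ, t (x n) = x (n + 2)

/-!
Call `y` *leading* on `[n, m]` if `y ∈ X_{n,m} \ X_{n,m-1}`. Counting orders, `X_{n,m-1}` has
index `p` in `X_{n,m}`, hence index `1` or `p` in `Y ⊓ X_{n,m}`; so a single leading element
`a ∈ Y` on `[n, m]` generates `Y ⊓ X_{n,m}` together with `Y ⊓ X_{n,m-1}`, and induction on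
`m - n` shows that `Y` is generated by leading elements, one for each interval that carries any.
The same index count gives `X_{n',m-1} ⊓ X_{n,m} = X_{n,m-1}` for `n' ≤ n`, so an element
leading on `[n, m]` is leading on `[n', m]` as well. Since `t^k` moves `[n, m]` to
`[n + 2k, m + 2k]`, the shifts of one element of `Y` leading on a shortest possible interval with
even right end provide leading elements for all intervals with even right end; a second element
does the same for odd right ends.
-/

namespace Subgroup

variable {G : Type*} [Group G] {H K L : Subgroup G}

theorem le_or_le_of_relIndex_prime (hHK : H ≤ K) (hKL : K ≤ L) (hp : (H.relIndex L).Prime) :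
    K ≤ H ∨ L ≤ K := by
  rw [← relIndex_mul_relIndex H K L hHK hKL, Nat.prime_mul_iff] at hp
  rw [← relIndex_eq_one, ← relIndex_eq_one]
  exact hp.symm.imp And.right And.right

theorem le_inf_sup_zpowers_of_relIndex_prime (hp : (H.relIndex L).Prime) {a : G} (haL : a ∈ L)
    (haH : a ∉ H) : L ≤ H ⊓ L ⊔ zpowers a := by
  have hle : H ⊓ L ⊔ zpowers a ≤ L := sup_le inf_le_right (zpowers_le.mpr haL)
  rw [← inf_relIndex_right H L] at hp
  refine (le_or_le_of_relIndex_prime le_sup_left hle hp).resolve_left fun h => haH ?_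
  exact (h (mem_sup_right (mem_zpowers a))).1

theorem card_mul_relIndex (h : H ≤ K) : Nat.card H * H.relIndex K = Nat.card K := by
  simpa only [relIndex_bot_left] using relIndex_mul_relIndex ⊥ H K bot_le h

end Subgroup

section

variable {p : ℕ} {X : Type*} [Group X] {x : ℤ → X}

theorem XIcc_mono (x : ℤ → X) {n n' m m' : ℤ} (hn : n' ≤ n) (hm : m ≤ m') :
    XIcc x n m ≤ XIcc x n' m' :=
  Subgroup.closure_mono (Set.image_mono (Set.Icc_subset_Icc hn hm))

theorem XIcc_eq_bot (x : ℤ → X) {n m : ℤ} (h : m < n) : XIcc x n m = ⊥ := by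
  rw [XIcc, Set.Icc_eq_empty h.not_ge, Set.image_empty, Subgroup.closure_empty]

theorem XIcc_le_XIcc_pred_of_mem (x : ℤ → X) {n m : ℤ} (h : x m ∈ XIcc x n (m - 1)) :
    XIcc x n m ≤ XIcc x n (m - 1) := by
  refine (Subgroup.closure_le _).mpr ?_
  rintro _ ⟨k, ⟨hnk, hkm⟩, rfl⟩
  rcases hkm.eq_or_lt with rfl | hkm
  · exact h
  · exact Subgroup.subset_closure ⟨k, ⟨hnk, by omega⟩, rfl⟩

theorem zpow_apply_of_shift {t : MulAut X} (ht : ∀ n, t (x n) = x (n + 2)) (k n : ℤ) :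
    (t ^ k) (x n) = x (n + 2 * k) := by
  induction k using Int.induction_on generalizing n with
  | zero => simp
  | succ k ih => rw [zpow_add_one, MulAut.mul_apply, ht, ih]; ring_nf
  | pred k ih =>
    have ht' : t⁻¹ (x n) = x (n - 2) := by
      rw [MulAut.inv_apply, MulEquiv.symm_apply_eq, ht, sub_add_cancel]
    rw [zpow_sub_one, MulAut.mul_apply, ht', ih]; ring_nf

theorem map_zpow_XIcc {t : MulAut X} (ht : ∀ n, t (x n) = x (n + 2)) (k n m : ℤ) :
    (XIcc x n m).map (t ^ k).toMonoidHom = XIcc x (n + 2 * k) (m + 2 * k) := by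
  rw [XIcc, MonoidHom.map_closure, Set.image_image, XIcc, ← Set.image_add_const_Icc,
    Set.image_image]
  simp only [MulEquiv.coe_toMonoidHom, zpow_apply_of_shift ht]

open Pointwise in
theorem zpow_mem_of_map_eq {t : MulAut X} {Y : Subgroup X} (hY : Y.map t.toMonoidHom = Y)
    (k : ℤ) {y : X} (hy : y ∈ Y) : (t ^ k) y ∈ Y := by
  have ht : t ∈ MulAction.stabilizer (MulAut X) Y := hY
  have hk : (t ^ k) • Y = Y := MulAction.mem_stabilizer_iff.mp (zpow_mem ht k)
  exact hk ▸ Subgroup.smul_mem_pointwise_smul y _ Y hy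

def XIccLeading (x : ℤ → X) (n m : ℤ) : Set X :=
  (XIcc x n m : Set X) \ XIcc x n (m - 1)

theorem le_of_mem_XIccLeading {n m : ℤ} {y : X} (hy : y ∈ XIccLeading x n m) : n ≤ m := by
  by_contra! h
  rw [XIccLeading, XIcc_eq_bot x h] at hy
  exact hy.2 (Subgroup.mem_bot.mp hy.1 ▸ one_mem _)

theorem zpow_mem_XIccLeading_iff {t : MulAut X} (ht : ∀ n, t (x n) = x (n + 2)) {k n m : ℤ}
    {y : X} : (t ^ k) y ∈ XIccLeading x (n + 2 * k) (m + 2 * k) ↔ y ∈ XIccLeading x n m := by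
  have hinj : Function.Injective (t ^ k).toMonoidHom := (t ^ k).injective
  simp only [XIccLeading, Set.mem_sdiff, SetLike.mem_coe]
  rw [← map_zpow_XIcc ht, show m + 2 * k - 1 = m - 1 + 2 * k by ring, ← map_zpow_XIcc ht]
  exact and_congr (Subgroup.mem_map_iff_mem hinj) (not_congr (Subgroup.mem_map_iff_mem hinj))

namespace IsZSystem

variable (hX : IsZSystem p x)
include hX

theorem exists_mem_XIcc (g : X) : ∃ n m : ℤ, g ∈ XIcc x n m := by
  have hg : g ∈ Subgroup.closure (Set.range x) := hX.closure_range ▸ Subgroup.mem_top g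
  induction hg using Subgroup.closure_induction with
  | mem _ h =>
    obtain ⟨n, rfl⟩ := h
    exact ⟨n, n, Subgroup.subset_closure ⟨n, Set.left_mem_Icc.mpr le_rfl, rfl⟩⟩
  | one => exact ⟨0, 0, one_mem _⟩
  | mul _ _ _ _ h₁ h₂ =>
    obtain ⟨n₁, m₁, h₁⟩ := h₁
    obtain ⟨n₂, m₂, h₂⟩ := h₂
    exact ⟨min n₁ n₂, max m₁ m₂, mul_mem (XIcc_mono x (min_le_left _ _) (le_max_left _ _) h₁)
      (XIcc_mono x (min_le_right _ _) (le_max_right _ _) h₂)⟩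
  | inv _ _ h =>
    obtain ⟨n, m, h⟩ := h
    exact ⟨n, m, inv_mem h⟩

theorem card_XIcc (n m : ℤ) : Nat.card (XIcc x n m) = p ^ (m + 1 - n).toNat := by
  rcases le_or_gt n m with h | h
  · rw [hX.card_Icc n m h, sub_add_eq_add_sub]
  · rw [XIcc_eq_bot x h, Subgroup.card_bot, Int.toNat_of_nonpos (by omega), pow_zero]

variable (hp : p.Prime)
include hp

theorem relIndex_XIcc_pred {n m : ℤ} (h : n ≤ m) :
    (XIcc x n (m - 1)).relIndex (XIcc x n m) = p := by
  have hcard := Subgroup.card_mul_relIndex (XIcc_mono x (le_refl n) (sub_le_self m zero_le_one))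
  rw [hX.card_XIcc, hX.card_XIcc, show (m + 1 - n).toNat = (m - 1 + 1 - n).toNat + 1 by omega,
    pow_succ] at hcard
  exact Nat.eq_of_mul_eq_mul_left (pow_pos hp.pos _) hcard


theorem x_notMem_XIcc_pred {n m : ℤ} (h : n ≤ m) : x m ∉ XIcc x n (m - 1) := fun hm => by
  have := hX.relIndex_XIcc_pred hp h
  rw [Subgroup.relIndex_eq_one.mpr (XIcc_le_XIcc_pred_of_mem x hm)] at this
  exact hp.one_lt.ne this

theorem XIcc_pred_inf_XIcc {n' n m : ℤ} (hn : n' ≤ n) (hm : n ≤ m) :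
    XIcc x n' (m - 1) ⊓ XIcc x n m = XIcc x n (m - 1) := by
  have hle : XIcc x n (m - 1) ≤ XIcc x n' (m - 1) ⊓ XIcc x n m :=
    le_inf (XIcc_mono x hn le_rfl) (XIcc_mono x le_rfl (sub_le_self m zero_le_one))
  rcases Subgroup.le_or_le_of_relIndex_prime hle inf_le_right
    (hX.relIndex_XIcc_pred hp hm ▸ hp) with h | h
  · exact le_antisymm h hle
  · have hxm : x m ∈ XIcc x n m := Subgroup.subset_closure ⟨m, ⟨hm, le_rfl⟩, rfl⟩
    exact absurd (h hxm).1 (hX.x_notMem_XIcc_pred hp (hn.trans hm))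

theorem XIccLeading_subset {n' n m : ℤ} (hn : n' ≤ n) :
    XIccLeading x n m ⊆ XIccLeading x n' m := fun y hy => by
  refine ⟨XIcc_mono x hn le_rfl hy.1, fun hy' => hy.2 ?_⟩
  rw [← hX.XIcc_pred_inf_XIcc hp hn (le_of_mem_XIccLeading hy)]
  exact ⟨hy', hy.1⟩

theorem relIndex_XIcc_pred_of_le {n m : ℤ} {L : Subgroup X} (hL : L ≤ XIcc x n m)
    (hL' : ¬ L ≤ XIcc x n (m - 1)) : (XIcc x n (m - 1)).relIndex L = p := by
  have hnm : n ≤ m := by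
    by_contra! h
    exact hL' (hL.trans (XIcc_eq_bot x h ▸ bot_le))
  obtain ⟨j, -, hj⟩ := (Nat.dvd_prime_pow hp).mp <| (Subgroup.relIndex_dvd_card _ _).trans <|
    (Subgroup.card_dvd_of_le hL).trans (hX.card_XIcc n m).dvd
  have hle : (XIcc x n (m - 1)).relIndex L ≤ p :=
    hX.relIndex_XIcc_pred hp hnm ▸ Subgroup.relIndex_le_of_le_right hL
      (hX.relIndex_XIcc_pred hp hnm ▸ hp.ne_zero)
  have hne : (XIcc x n (m - 1)).relIndex L ≠ 1 := mt Subgroup.relIndex_eq_one.mp hL'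
  rw [hj] at hle hne ⊢
  have hj1 : j ≤ 1 := (Nat.pow_le_pow_iff_right hp.one_lt).mp (by rwa [pow_one])
  have hj0 : j ≠ 0 := by rintro rfl; exact hne (pow_zero p)
  rw [show j = 1 by omega, pow_one]

section Lift

variable {Y Z : Subgroup X}
  (hlead : ∀ n m, (∃ y ∈ Y, y ∈ XIccLeading x n m) → ∃ a ∈ Y ⊓ Z, a ∈ XIccLeading x n m)
include hlead

theorem inf_XIcc_le_of_inf_XIcc_pred_le {n m : ℤ} (ih : Y ⊓ XIcc x n (m - 1) ≤ Z) :
    Y ⊓ XIcc x n m ≤ Z := by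
  by_cases h : Y ⊓ XIcc x n m ≤ XIcc x n (m - 1)
  · exact (le_inf inf_le_left h).trans ih
  obtain ⟨y, ⟨hyY, hy⟩, hy'⟩ := Set.not_subset.mp h
  obtain ⟨a, ⟨haY, haZ⟩, ha, ha'⟩ := hlead n m ⟨y, hyY, hy, hy'⟩
  have haL : a ∈ Y ⊓ XIcc x n m := Subgroup.mem_inf.mpr ⟨haY, ha⟩
  refine (Subgroup.le_inf_sup_zpowers_of_relIndex_prime ?_ haL ha').trans ?_
  · exact (hX.relIndex_XIcc_pred_of_le hp inf_le_right h).symm ▸ hp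
  · exact sup_le ((le_inf (inf_le_right.trans inf_le_left) inf_le_left).trans ih)
      (Subgroup.zpowers_le.mpr haZ)

theorem inf_XIcc_le (n m : ℤ) : Y ⊓ XIcc x n m ≤ Z := by
  rcases lt_or_ge m n with h | h
  · exact inf_le_right.trans (XIcc_eq_bot x h ▸ bot_le)
  induction m, h using Int.leInduction with
  | base =>
    refine hX.inf_XIcc_le_of_inf_XIcc_pred_le hp hlead ?_
    exact inf_le_right.trans (XIcc_eq_bot x (sub_one_lt n) ▸ bot_le)
  | succ m _ ih =>
    refine hX.inf_XIcc_le_of_inf_XIcc_pred_le hp hlead ?_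
    rwa [add_sub_cancel_right]

end Lift

theorem exists_forall_zpow_mem_XIccLeading {t : MulAut X} (ht : ∀ n, t (x n) = x (n + 2))
    (Y : Subgroup X) (r : ℤ) :
    ∃ c ∈ Y, ∀ n m, m % 2 = r → (∃ y ∈ Y, y ∈ XIccLeading x n m) →
      ∃ k : ℤ, (t ^ k) c ∈ XIccLeading x n m := by
  classical
  by_cases hex : ∃ y ∈ Y, ∃ n m, m % 2 = r ∧ y ∈ XIccLeading x n m
  swap
  · exact ⟨1, one_mem Y, fun n m hm ⟨y, hy, hlead⟩ => (hex ⟨y, hy, n, m, hm, hlead⟩).elim⟩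
  have hlen : ∃ ℓ : ℕ, ∃ y ∈ Y, ∃ n m, m % 2 = r ∧ y ∈ XIccLeading x n m ∧ m - n = ℓ := by
    obtain ⟨y, hy, n, m, hm, hlead⟩ := hex
    exact ⟨(m - n).toNat, y, hy, n, m, hm, hlead, by have := le_of_mem_XIccLeading hlead; omega⟩
  obtain ⟨c, hcY, nc, mc, hmc, hc, hclen⟩ := Nat.find_spec hlen
  refine ⟨c, hcY, fun n m hm ⟨y, hy, hlead⟩ => ?_⟩
  have hnm := le_of_mem_XIccLeading hlead
  have hmin : Nat.find hlen ≤ (m - n).toNat :=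
    Nat.find_min' hlen ⟨y, hy, n, m, hm, hlead, by omega⟩
  obtain ⟨k, rfl⟩ : ∃ k, m = mc + 2 * k := ⟨(m - mc) / 2, by omega⟩
  exact ⟨k, hX.XIccLeading_subset hp (by omega) ((zpow_mem_XIccLeading_iff ht).mpr hc)⟩

end IsZSystem

end

/-- A shift-invariant subgroup `Y` of a ℤ-system of prime order is generated by the
shifts `t^k a, t^k b` (`k ∈ ℤ`) of two of its elements `a, b`. -/
theorem shift_invariant_two_generators (p : ℕ) (hp : p.Prime) {X : Type*} [Group X]
    (x : ℤ → X) (hX : IsZSystem p x)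
    (t : MulAut X) (ht : ∀ n : ℤ, t (x n) = x (n + 2))
    (Y : Subgroup X) (hY : Subgroup.map t.toMonoidHom Y = Y) :
    ∃ a ∈ Y, ∃ b ∈ Y,
      Y = Subgroup.closure {g : X | ∃ k : ℤ, g = (t ^ k) a ∨ g = (t ^ k) b} := by
  obtain ⟨a, haY, ha⟩ := hX.exists_forall_zpow_mem_XIccLeading hp ht Y 0
  obtain ⟨b, hbY, hb⟩ := hX.exists_forall_zpow_mem_XIccLeading hp ht Y 1
  refine ⟨a, haY, b, hbY, le_antisymm (fun y hy => ?_) ((Subgroup.closure_le _).mpr ?_)⟩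
  · obtain ⟨n, m, hym⟩ := hX.exists_mem_XIcc y
    refine hX.inf_XIcc_le hp (fun n m hlead => ?_) n m ⟨hy, hym⟩
    rcases Int.emod_two_eq m with hm | hm
    · obtain ⟨k, hk⟩ := ha n m hm hlead
      exact ⟨_, ⟨zpow_mem_of_map_eq hY k haY, Subgroup.subset_closure ⟨k, .inl rfl⟩⟩, hk⟩
    · obtain ⟨k, hk⟩ := hb n m hm hlead
      exact ⟨_, ⟨zpow_mem_of_map_eq hY k hbY, Subgroup.subset_closure ⟨k, .inr rfl⟩⟩, hk⟩
  · rintro _ ⟨k, rfl | rfl⟩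
    exacts [zpow_mem_of_map_eq hY k haY, zpow_mem_of_map_eq hY k hbY]
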